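/- Let s0 > 0. Then there exists a constant C (depending only on s0) such that for all s ≥ s0, ∫_{0}^{s} (Φ'(z) - Φ'(z-s))² · ( 1/(Φ(z) - Φ(z-s)) + 1/(Φ(-z) + Φ(z-s)) ) dz ≤ C. -/
import Mathlib


open MeasureTheory Real Set Filter

/-- The standard normal density `Φ'(z) = (1/√(2π)) e^{-z²/2}`. -/
noncomputable def Φ' (z : ℝ) : ℝ := (Real.sqrt (2 * Real.pi))⁻¹ * Real.exp (-z ^ 2 / 2)

/-- The standard normal cumulative distribution function `Φ`. -/
noncomputable def Φ (z : ℝ) : ℝ := ∫ u in Set.Iic z, Φ' u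


lemma Φ'_pos (z : ℝ) : 0 < Φ' z := by
  have := Real.pi_pos
  unfold Φ'
  positivity

lemma Φ'_cont : Continuous Φ' := by
  unfold Φ'
  fun_prop

lemma integrable_Φ' : Integrable Φ' := by
  have h : Integrable (fun x : ℝ => Real.exp (-(1/2) * x ^ 2)) := integrable_exp_neg_mul_sq (by norm_num)
  have h2 : Φ' = fun z => (Real.sqrt (2 * Real.pi))⁻¹ * Real.exp (-(1/2) * z ^ 2) := by
    funext z; unfold Φ'; ring_nf
  rw [h2]
  exact h.const_mul _

lemma integral_Φ' : ∫ z, Φ' z = 1 := by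
  have h : ∫ x : ℝ, Real.exp (-(1/2) * x ^ 2) = Real.sqrt (π / (1/2)) := integral_gaussian (1/2)
  have h2 : Φ' = fun z => (Real.sqrt (2 * Real.pi))⁻¹ * Real.exp (-(1/2) * z ^ 2) := by
    funext z; unfold Φ'; ring_nf
  rw [h2, integral_const_mul, h, show π / (1/2 : ℝ) = 2 * π by ring,
    inv_mul_cancel₀ (by positivity)]

lemma Φ'_anti {a b : ℝ} (h : |a| ≤ |b|) : Φ' b ≤ Φ' a := by
  unfold Φ'
  have hs : (0:ℝ) < Real.sqrt (2 * Real.pi) := Real.sqrt_pos.2 (by positivity)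
  have h2 : a ^ 2 ≤ b ^ 2 := by
    have := sq_abs a; have := sq_abs b
    nlinarith [abs_nonneg a]
  gcongr


lemma Φ_sub (a b : ℝ) : Φ b - Φ a = ∫ x in a..b, Φ' x :=
  intervalIntegral.integral_Iic_sub_Iic integrable_Φ'.integrableOn integrable_Φ'.integrableOn

lemma Φ_cont : Continuous Φ := by
  have h : ∀ z, Φ z = Φ 0 + ∫ t in (0:ℝ)..z, Φ' t := by
    intro z; have := Φ_sub 0 z; linarith
  have h2 : Φ = fun z => Φ 0 + ∫ t in (0:ℝ)..z, Φ' t := funext h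
  rw [h2]
  exact continuous_const.add (integrable_Φ'.continuous_primitive 0)

lemma Φ_mono : Monotone Φ := by
  intro a b hab
  have h := Φ_sub a b
  have : 0 ≤ ∫ x in a..b, Φ' x :=
    intervalIntegral.integral_nonneg hab (fun u _ => (Φ'_pos u).le)
  linarith

lemma key_lower (a b c : ℝ) (hab : a ≤ b) (hc : ∀ u ∈ Icc a b, c ≤ Φ' u) :
    c * (b - a) ≤ Φ b - Φ a := by
  rw [Φ_sub]
  have h1 : (∫ _ in a..b, c) ≤ ∫ x in a..b, Φ' x := by
    apply intervalIntegral.integral_mono_on hab (intervalIntegrable_const)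
      (Φ'_cont.intervalIntegrable a b) hc
  rwa [intervalIntegral.integral_const, smul_eq_mul, mul_comm] at h1

lemma Φ_pos (z : ℝ) : 0 < Φ z := by
  have h1 : Φ' (|z| + 1) * (z - (z-1)) ≤ Φ z - Φ (z-1) := by
    apply key_lower _ _ _ (by linarith)
    intro u hu
    apply Φ'_anti
    rw [abs_of_nonneg (show (0:ℝ) ≤ |z| + 1 by positivity)]
    rcases abs_cases u with ⟨h, _⟩ | ⟨h, _⟩ <;> rcases abs_cases z with ⟨h2, _⟩ | ⟨h2, _⟩ <;>
      simp only [mem_Icc] at hu <;> linarith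
  have h2 : 0 ≤ Φ (z - 1) := setIntegral_nonneg measurableSet_Iic (fun u _ => (Φ'_pos u).le)
  have h3 := Φ'_pos (|z| + 1)
  nlinarith

lemma Φ_lb {w : ℝ} (hw : w ≤ 0) : Φ' (w - 1) ≤ Φ w := by
  have h1 : Φ' (w - 1) * (w - (w-1)) ≤ Φ w - Φ (w-1) := by
    apply key_lower _ _ _ (by linarith)
    intro u hu
    apply Φ'_anti
    simp only [mem_Icc] at hu
    rcases abs_cases u with ⟨h, _⟩ | ⟨h, _⟩ <;> rcases abs_cases (w-1) with ⟨h2, _⟩ | ⟨h2, _⟩ <;>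
      linarith
  have h2 : 0 ≤ Φ (w - 1) := setIntegral_nonneg measurableSet_Iic (fun u _ => (Φ'_pos u).le)
  nlinarith [Φ'_pos (w-1)]

lemma D1_lb {s0 s z : ℝ} (hs0 : 0 < s0) (hs : s0 ≤ s) (hz : z ∈ Icc 0 s) :
    Φ' (s0/2) * (s0/2) ≤ Φ z - Φ (z - s) := by
  obtain ⟨hz0, hzs⟩ := hz
  rcases le_or_gt (s0/2) z with h | h
  · have h1 : Φ' (s0/2) * (s0/2) ≤ Φ (s0/2) - Φ 0 := by
      have := key_lower 0 (s0/2) (Φ' (s0/2)) (by linarith) ?_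
      · linarith [this]
      · intro u hu
        apply Φ'_anti
        simp only [mem_Icc] at hu
        rcases abs_cases u with ⟨h2, _⟩ | ⟨h2, _⟩ <;>
          rcases abs_cases (s0/2) with ⟨h3, _⟩ | ⟨h3, _⟩ <;> linarith
    have h2 : Φ (s0/2) ≤ Φ z := Φ_mono h
    have h3 : Φ (z - s) ≤ Φ 0 := Φ_mono (by linarith)
    linarith
  · have h1 : Φ' (s0/2) * (s0/2) ≤ Φ 0 - Φ (-(s0/2)) := by
      have := key_lower (-(s0/2)) 0 (Φ' (s0/2)) (by linarith) ?_
      · linarith [this]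
      · intro u hu
        apply Φ'_anti
        simp only [mem_Icc] at hu
        rcases abs_cases u with ⟨h2, _⟩ | ⟨h2, _⟩ <;>
          rcases abs_cases (s0/2) with ⟨h3, _⟩ | ⟨h3, _⟩ <;> linarith
    have h2 : Φ 0 ≤ Φ z := Φ_mono hz0
    have h3 : Φ (z - s) ≤ Φ (-(s0/2)) := Φ_mono (by linarith)
    linarith

lemma Φ'_sq_eq (z : ℝ) : Φ' z ^ 2 = Real.exp 1 * (Φ' (z - 1) * Φ' (z + 1)) := by
  unfold Φ'
  have e1 : rexp (-z^2/2) ^ 2 = rexp (-z^2) := by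
    rw [sq, ← Real.exp_add]; congr 1; ring
  have e2 : rexp 1 * (rexp (-(z-1)^2/2) * rexp (-(z+1)^2/2)) = rexp (-z^2) := by
    rw [← Real.exp_add, ← Real.exp_add]; congr 1; ring
  calc ((√(2 * π))⁻¹ * rexp (-z ^ 2 / 2)) ^ 2 = (√(2 * π))⁻¹ ^ 2 * rexp (-z^2) := by
        rw [mul_pow, e1]
    _ = (√(2 * π))⁻¹ ^ 2 * (rexp 1 * (rexp (-(z-1)^2/2) * rexp (-(z+1)^2/2))) := by rw [e2]
    _ = rexp 1 * ((√(2 * π))⁻¹ * rexp (-(z - 1) ^ 2 / 2) * ((√(2 * π))⁻¹ * rexp (-(z + 1) ^ 2 / 2))) := by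
        ring

lemma J_le_one {s : ℝ} (hs : 0 ≤ s) (a : ℝ) : (∫ z in (0:ℝ)..s, Φ' (z - a)) ≤ 1 := by
  rw [intervalIntegral.integral_comp_sub_right _ a,
    intervalIntegral.integral_of_le (by linarith)]
  calc (∫ x in Ioc (0 - a) (s - a), Φ' x) ≤ ∫ x, Φ' x :=
        setIntegral_le_integral integrable_Φ' (Eventually.of_forall fun u => (Φ'_pos u).le)
    _ = 1 := integral_Φ'

lemma Φ'_neg (x : ℝ) : Φ' (-x) = Φ' x := by unfold Φ'; rw [neg_pow]; ring_nf

lemma pointwise_bound {s0 s : ℝ} (hs0 : 0 < s0) (hs : s0 ≤ s) {z : ℝ} (hz : z ∈ Icc 0 s) :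
    (Φ' z - Φ' (z - s)) ^ 2 * (1 / (Φ z - Φ (z - s)) + 1 / (Φ (-z) + Φ (z - s)))
      ≤ (2 * Φ' 0 / (Φ' (s0/2) * (s0/2))) * (Φ' z + Φ' (z - s))
        + (2 * Real.exp 1) * (Φ' (z - 1) + Φ' (z - s + 1)) := by
  obtain ⟨hz0, hzs⟩ := hz
  set c1 := Φ' (s0/2) * (s0/2) with hc1def
  have hc1 : 0 < c1 := by
    have := Φ'_pos (s0/2); positivity
  have hD1 : c1 ≤ Φ z - Φ (z - s) := D1_lb hs0 hs ⟨hz0, hzs⟩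
  have hD2a : Φ' (z + 1) ≤ Φ (-z) := by
    have := Φ_lb (neg_nonpos_of_nonneg hz0)
    rwa [show -z - 1 = -(z+1) by ring, Φ'_neg] at this
  have hD2b : Φ' (z - s - 1) ≤ Φ (z - s) := Φ_lb (by linarith)
  have hΦz : 0 < Φ (-z) := Φ_pos _
  have hΦzs : 0 < Φ (z - s) := Φ_pos _
  have hD2 : 0 < Φ (-z) + Φ (z - s) := by linarith
  set N := (Φ' z - Φ' (z - s)) ^ 2 with hNdef
  have hN : N ≤ 2 * Φ' z ^ 2 + 2 * Φ' (z - s) ^ 2 := by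
    nlinarith [sq_nonneg (Φ' z + Φ' (z - s))]
  have hN0 : 0 ≤ N := sq_nonneg _
  -- Term 1
  have hT1 : N * (1 / (Φ z - Φ (z - s))) ≤ (2 * Φ' 0 / c1) * (Φ' z + Φ' (z - s)) := by
    have hb1 : Φ' z ≤ Φ' 0 := Φ'_anti (by simp [abs_nonneg])
    have hb2 : Φ' (z - s) ≤ Φ' 0 := Φ'_anti (by simp [abs_nonneg])
    have hNb : N ≤ 2 * Φ' 0 * (Φ' z + Φ' (z - s)) := by
      nlinarith [Φ'_pos z, Φ'_pos (z - s)]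
    calc N * (1 / (Φ z - Φ (z - s))) ≤ (2 * Φ' 0 * (Φ' z + Φ' (z - s))) * (1 / c1) := by
          apply mul_le_mul hNb (one_div_le_one_div_of_le hc1 hD1) (one_div_nonneg.2 (by linarith)) (by nlinarith [Φ'_pos 0, Φ'_pos z, Φ'_pos (z - s)])
      _ = (2 * Φ' 0 / c1) * (Φ' z + Φ' (z - s)) := by ring
  -- Term 2
  have hT2 : N * (1 / (Φ (-z) + Φ (z - s)))
      ≤ (2 * Real.exp 1) * (Φ' (z - 1) + Φ' (z - s + 1)) := by
    have e1 : Φ' z ^ 2 * (1 / (Φ (-z) + Φ (z - s))) ≤ Real.exp 1 * Φ' (z - 1) := by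
      have hp : 0 < Φ' (z + 1) := Φ'_pos _
      calc Φ' z ^ 2 * (1 / (Φ (-z) + Φ (z - s)))
          ≤ Φ' z ^ 2 * (1 / Φ' (z + 1)) := by
            apply mul_le_mul_of_nonneg_left (one_div_le_one_div_of_le hp (by linarith)) (sq_nonneg _)
        _ = Real.exp 1 * Φ' (z - 1) := by
            rw [Φ'_sq_eq]; field_simp
    have e2 : Φ' (z - s) ^ 2 * (1 / (Φ (-z) + Φ (z - s))) ≤ Real.exp 1 * Φ' (z - s + 1) := by
      have hp : 0 < Φ' (z - s - 1) := Φ'_pos _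
      calc Φ' (z - s) ^ 2 * (1 / (Φ (-z) + Φ (z - s)))
          ≤ Φ' (z - s) ^ 2 * (1 / Φ' (z - s - 1)) := by
            apply mul_le_mul_of_nonneg_left (one_div_le_one_div_of_le hp (by linarith)) (sq_nonneg _)
        _ = Real.exp 1 * Φ' (z - s + 1) := by
            rw [Φ'_sq_eq]
            rw [show z - s + 1 = (z - s) + 1 by ring] at *
            field_simp
    have h3 : N * (1 / (Φ (-z) + Φ (z - s)))
        ≤ (2 * Φ' z ^ 2 + 2 * Φ' (z - s) ^ 2) * (1 / (Φ (-z) + Φ (z - s))) :=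
      mul_le_mul_of_nonneg_right hN (by positivity)
    calc N * (1 / (Φ (-z) + Φ (z - s)))
        ≤ 2 * (Φ' z ^ 2 * (1 / (Φ (-z) + Φ (z - s)))) + 2 * (Φ' (z - s) ^ 2 * (1 / (Φ (-z) + Φ (z - s)))) := by
          linarith [h3]
      _ ≤ 2 * (Real.exp 1 * Φ' (z - 1)) + 2 * (Real.exp 1 * Φ' (z - s + 1)) := by
          linarith [e1, e2]
      _ = (2 * Real.exp 1) * (Φ' (z - 1) + Φ' (z - s + 1)) := by ring
  have expand : N * (1 / (Φ z - Φ (z - s)) + 1 / (Φ (-z) + Φ (z - s)))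
      = N * (1 / (Φ z - Φ (z - s))) + N * (1 / (Φ (-z) + Φ (z - s))) := by ring
  rw [expand]
  exact add_le_add hT1 hT2


/-- the middle-interval integrals `∫_0^s` are uniformly bounded for `s ≥ s0 > 0`. -/
theorem uniform_bound_middle (s0 : ℝ) (hs0 : 0 < s0) :
    ∃ C : ℝ, ∀ s : ℝ, s0 ≤ s →
      IntervalIntegrable (fun z : ℝ =>
        (Φ' z - Φ' (z - s)) ^ 2 *
          (1 / (Φ z - Φ (z - s)) + 1 / (Φ (-z) + Φ (z - s)))) volume 0 s ∧
      (∫ z in (0:ℝ)..s,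
        (Φ' z - Φ' (z - s)) ^ 2 *
          (1 / (Φ z - Φ (z - s)) + 1 / (Φ (-z) + Φ (z - s)))) ≤ C := by
  set K1 := 2 * Φ' 0 / (Φ' (s0/2) * (s0/2)) with hK1def
  have hK1 : 0 ≤ K1 := by
    have h1 := Φ'_pos 0
    have h2 := Φ'_pos (s0/2)
    positivity
  refine ⟨2 * K1 + 4 * Real.exp 1, fun s hs => ?_⟩
  have hs' : (0:ℝ) ≤ s := le_trans hs0.le hs
  have hc1 : 0 < Φ' (s0/2) * (s0/2) := by
    have := Φ'_pos (s0/2); positivity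
  -- continuity of the integrand on [0, s]
  have hnum : Continuous fun z : ℝ => (Φ' z - Φ' (z - s)) ^ 2 :=
    (Φ'_cont.sub (Φ'_cont.comp (continuous_id.sub continuous_const))).pow 2
  have hD2cont : Continuous fun z : ℝ => 1 / (Φ (-z) + Φ (z - s)) := by
    apply Continuous.div continuous_const
      ((Φ_cont.comp continuous_neg).add (Φ_cont.comp (continuous_id.sub continuous_const)))
    intro z
    exact ne_of_gt (add_pos (Φ_pos _) (Φ_pos _))
  have hcontf : ContinuousOn (fun z : ℝ =>
      (Φ' z - Φ' (z - s)) ^ 2 *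
        (1 / (Φ z - Φ (z - s)) + 1 / (Φ (-z) + Φ (z - s)))) (Icc 0 s) := by
    apply ContinuousOn.mul hnum.continuousOn
    apply ContinuousOn.add
    · apply ContinuousOn.div continuousOn_const
        (Φ_cont.sub (Φ_cont.comp (continuous_id.sub continuous_const))).continuousOn
      intro z hz
      exact ne_of_gt (lt_of_lt_of_le hc1 (D1_lb hs0 hs hz))
    · exact hD2cont.continuousOn
  have hf_int : IntervalIntegrable (fun z : ℝ =>
      (Φ' z - Φ' (z - s)) ^ 2 *
        (1 / (Φ z - Φ (z - s)) + 1 / (Φ (-z) + Φ (z - s)))) volume 0 s := by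
    apply ContinuousOn.intervalIntegrable
    rwa [uIcc_of_le hs']
  refine ⟨hf_int, ?_⟩
  -- the dominating function
  have hg1 : Continuous fun z : ℝ => Φ' z + Φ' (z - s) :=
    Φ'_cont.add (Φ'_cont.comp (continuous_id.sub continuous_const))
  have hg2 : Continuous fun z : ℝ => Φ' (z - 1) + Φ' (z - s + 1) :=
    (Φ'_cont.comp (continuous_id.sub continuous_const)).add
      (Φ'_cont.comp ((continuous_id.sub continuous_const).add continuous_const))
  have hg_int : IntervalIntegrable (fun z : ℝ =>
      K1 * (Φ' z + Φ' (z - s)) + (2 * Real.exp 1) * (Φ' (z - 1) + Φ' (z - s + 1)))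
      volume 0 s :=
    ((continuous_const.mul hg1).add (continuous_const.mul hg2)).intervalIntegrable 0 s
  have hmono : (∫ z in (0:ℝ)..s,
      (Φ' z - Φ' (z - s)) ^ 2 *
        (1 / (Φ z - Φ (z - s)) + 1 / (Φ (-z) + Φ (z - s))))
      ≤ ∫ z in (0:ℝ)..s,
        K1 * (Φ' z + Φ' (z - s)) + (2 * Real.exp 1) * (Φ' (z - 1) + Φ' (z - s + 1)) := by
    apply intervalIntegral.integral_mono_on hs' hf_int hg_int
    intro z hz
    exact pointwise_bound hs0 hs hz
  refine hmono.trans ?_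
  have hint1 : IntervalIntegrable Φ' volume 0 s := Φ'_cont.intervalIntegrable 0 s
  have hintc : ∀ a : ℝ, IntervalIntegrable (fun z => Φ' (z - a)) volume 0 s := fun a =>
    (Φ'_cont.comp (continuous_id.sub continuous_const)).intervalIntegrable 0 s
  have hint4 : IntervalIntegrable (fun z => Φ' (z - s + 1)) volume 0 s :=
    (Φ'_cont.comp ((continuous_id.sub continuous_const).add continuous_const)).intervalIntegrable 0 s
  have split : (∫ z in (0:ℝ)..s,
      K1 * (Φ' z + Φ' (z - s)) + (2 * Real.exp 1) * (Φ' (z - 1) + Φ' (z - s + 1)))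
      = K1 * ((∫ z in (0:ℝ)..s, Φ' z) + ∫ z in (0:ℝ)..s, Φ' (z - s))
        + (2 * Real.exp 1) * ((∫ z in (0:ℝ)..s, Φ' (z - 1)) + ∫ z in (0:ℝ)..s, Φ' (z - s + 1)) := by
    rw [intervalIntegral.integral_add ((hint1.add (hintc s)).const_mul K1)
        (((hintc 1).add hint4).const_mul _),
      intervalIntegral.integral_const_mul, intervalIntegral.integral_const_mul,
      intervalIntegral.integral_add hint1 (hintc s),
      intervalIntegral.integral_add (hintc 1) hint4]
  rw [split]
  have I1 : (∫ z in (0:ℝ)..s, Φ' z) ≤ 1 := by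
    have := J_le_one hs' 0
    simpa using this
  have I2 : (∫ z in (0:ℝ)..s, Φ' (z - s)) ≤ 1 := J_le_one hs' s
  have I3 : (∫ z in (0:ℝ)..s, Φ' (z - 1)) ≤ 1 := J_le_one hs' 1
  have I4 : (∫ z in (0:ℝ)..s, Φ' (z - s + 1)) ≤ 1 := by
    have h := J_le_one hs' (s - 1)
    have he : (fun z => Φ' (z - s + 1)) = fun z => Φ' (z - (s - 1)) := by
      funext z; congr 1; ring
    rw [he]
    exact h
  have N1 : 0 ≤ ∫ z in (0:ℝ)..s, Φ' z :=
    intervalIntegral.integral_nonneg hs' (fun u _ => (Φ'_pos _).le)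
  have N2 : 0 ≤ ∫ z in (0:ℝ)..s, Φ' (z - s) :=
    intervalIntegral.integral_nonneg hs' (fun u _ => (Φ'_pos _).le)
  have N3 : 0 ≤ ∫ z in (0:ℝ)..s, Φ' (z - 1) :=
    intervalIntegral.integral_nonneg hs' (fun u _ => (Φ'_pos _).le)
  have N4 : 0 ≤ ∫ z in (0:ℝ)..s, Φ' (z - s + 1) :=
    intervalIntegral.integral_nonneg hs' (fun u _ => (Φ'_pos _).le)
  have he1 : (0:ℝ) < Real.exp 1 := Real.exp_pos 1
  nlinarith [mul_nonneg hK1 (by linarith : (0:ℝ) ≤ 2 - ((∫ z in (0:ℝ)..s, Φ' z) + ∫ z in (0:ℝ)..s, Φ' (z - s))),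
    mul_nonneg he1.le (by linarith : (0:ℝ) ≤ 2 - ((∫ z in (0:ℝ)..s, Φ' (z - 1)) + ∫ z in (0:ℝ)..s, Φ' (z - s + 1)))]
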